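/- arXiv:2205.11009 — 2 statements merged into one kernel-verified Lean document; each statement's English description precedes it below -/
import Mathlib

section
/- Let γ : ℝ → ℝ be 1-periodic, measurable, with 0 < c ≤ γ(t) ≤ C for all t, and ⟨γ⟩ = ∫₀¹ γ > 0. Let Γ_ε(t) = ∫₀^t γ(τ/ε) dτ and c_ε = Γ_ε^{-1}. Then there is a constant K depending only on c, C such that sup_{t ∈ ℝ} |c_ε(t) − t/⟨γ⟩| ≤ K ε for all ε > 0. -/
open MeasureTheory intervalIntegral

/-- Estimate (4.4): there is a constant `K` depending only on `c, C` such that for every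
measurable 1-periodic `γ` with `0 < c ≤ γ ≤ C` and positive mean, every `ε > 0`, and `c_ε`
the inverse of `Γ_ε(t) = ∫₀^t γ(τ/ε) dτ`, one has `sup_t |c_ε(t) − t/⟨γ⟩| ≤ K ε`. -/
theorem inverse_close_to_linear (c C : ℝ) (hc : 0 < c) (hcC : c ≤ C) :
    ∃ K : ℝ, 0 < K ∧
      ∀ γ : ℝ → ℝ, Measurable γ → (∀ t, γ (t + 1) = γ t) →
        (∀ t, c ≤ γ t ∧ γ t ≤ C) →
        0 < (∫ τ in (0:ℝ)..1, γ τ) →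
        ∀ ε : ℝ, 0 < ε →
          ∀ cε : ℝ → ℝ,
            Function.RightInverse cε (fun t : ℝ => ∫ τ in (0:ℝ)..t, γ (τ / ε)) →
            ∀ t : ℝ, |cε t - t / (∫ τ in (0:ℝ)..1, γ τ)| ≤ K * ε := by
  have hC : 0 < C := lt_of_lt_of_le hc hcC
  refine ⟨2 * C / c, by positivity, ?_⟩
  intro γ hmeas hper hbd hmean ε hε cε hinv t
  set m : ℝ := ∫ τ in (0:ℝ)..1, γ τ with hm
  -- integrability of γ on every interval
  have hint : ∀ a b : ℝ, IntervalIntegrable γ volume a b := by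
    intro a b
    refine IntervalIntegrable.mono_fun' (g := fun _ => C) intervalIntegrable_const
      hmeas.aestronglyMeasurable (ae_of_all _ fun x => ?_)
    have := hbd x
    show ‖γ x‖ ≤ C
    rw [Real.norm_eq_abs, abs_of_nonneg (le_trans hc.le this.1)]
    exact this.2
  have hmC : m ≤ C := by
    calc m ≤ ∫ _ in (0:ℝ)..1, C := by
            apply intervalIntegral.integral_mono_on (by norm_num) (hint 0 1)
              intervalIntegrable_const
            exact fun x _ => (hbd x).2
      _ = C := by simp
  -- Key: |∫₀^s γ - m s| ≤ 2C for all s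
  have key : ∀ s : ℝ, |(∫ τ in (0:ℝ)..s, γ τ) - m * s| ≤ 2 * C := by
    intro s
    set n : ℤ := ⌊s⌋ with hn
    have hsplit : (∫ τ in (0:ℝ)..s, γ τ)
        = (∫ τ in (0:ℝ)..(n:ℝ), γ τ) + ∫ τ in (n:ℝ)..s, γ τ :=
      (intervalIntegral.integral_add_adjacent_intervals (hint 0 n) (hint n s)).symm
    have hper' : Function.Periodic γ 1 := hper
    have hzn : (∫ τ in (0:ℝ)..(n:ℝ), γ τ) = n * m := by
      have := hper'.intervalIntegral_add_zsmul_eq n 0 hint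
      simpa [zsmul_eq_mul] using this
    have hfrac0 : (0:ℝ) ≤ s - n := by
      have := Int.floor_le s; linarith
    have hfrac1 : s - n ≤ 1 := by
      have := Int.lt_floor_add_one s; linarith
    have htail : |∫ τ in (n:ℝ)..s, γ τ| ≤ C := by
      have hle : (n:ℝ) ≤ s := Int.floor_le s
      have h1 : (∫ τ in (n:ℝ)..s, γ τ) ≤ ∫ _ in (n:ℝ)..s, C := by
        apply intervalIntegral.integral_mono_on hle (hint n s) intervalIntegrable_const
        exact fun x _ => (hbd x).2
      have h0 : 0 ≤ ∫ τ in (n:ℝ)..s, γ τ := by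
        apply intervalIntegral.integral_nonneg hle
        exact fun x _ => le_trans hc.le (hbd x).1
      rw [abs_of_nonneg h0]
      have : (∫ _ in (n:ℝ)..s, C) = (s - n) * C := by simp
      calc (∫ τ in (n:ℝ)..s, γ τ) ≤ (s - n) * C := by rw [← this]; exact h1
        _ ≤ 1 * C := by nlinarith
        _ = C := one_mul C
    have hm0 : 0 ≤ m := le_trans hmean.le le_rfl
    have hmid : |m * (s - n)| ≤ C := by
      rw [abs_of_nonneg (mul_nonneg hm0 hfrac0)]
      calc m * (s - n) ≤ C * 1 := by nlinarith
        _ = C := mul_one C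
    calc |(∫ τ in (0:ℝ)..s, γ τ) - m * s|
        = |(∫ τ in (n:ℝ)..s, γ τ) - m * (s - n)| := by rw [hsplit, hzn]; ring_nf
      _ ≤ |∫ τ in (n:ℝ)..s, γ τ| + |m * (s - n)| := abs_sub _ _
      _ ≤ C + C := add_le_add htail hmid
      _ = 2 * C := by ring
  -- Γ_ε in terms of the unit-scale integral
  set Γ : ℝ → ℝ := fun x => ∫ τ in (0:ℝ)..x, γ (τ / ε) with hΓ
  have hΓscale : ∀ x : ℝ, Γ x = ε * ∫ τ in (0:ℝ)..(x / ε), γ τ := by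
    intro x
    have := intervalIntegral.integral_comp_div (a := 0) (b := x) (f := γ) hε.ne'
    simpa [smul_eq_mul] using this
  have hΓclose : ∀ x : ℝ, |Γ x - m * x| ≤ 2 * C * ε := by
    intro x
    have := key (x / ε)
    have heq : Γ x - m * x = ε * ((∫ τ in (0:ℝ)..(x / ε), γ τ) - m * (x / ε)) := by
      rw [hΓscale]; field_simp
    rw [heq, abs_mul, abs_of_pos hε]
    calc ε * |(∫ τ in (0:ℝ)..(x / ε), γ τ) - m * (x / ε)| ≤ ε * (2 * C) := by
          exact mul_le_mul_of_nonneg_left this hε.le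
      _ = 2 * C * ε := by ring
  -- Γ grows at rate ≥ c
  have hgrow : ∀ a b : ℝ, a ≤ b → c * (b - a) ≤ Γ b - Γ a := by
    intro a b hab
    have hi : ∀ u v : ℝ, IntervalIntegrable (fun τ => γ (τ / ε)) volume u v := by
      intro u v
      refine IntervalIntegrable.mono_fun' (g := fun _ => C) intervalIntegrable_const
        ((hmeas.comp (measurable_id.div_const ε)).aestronglyMeasurable)
        (ae_of_all _ fun x => ?_)
      have := hbd (x / ε)
      show ‖γ (x / ε)‖ ≤ C
      rw [Real.norm_eq_abs, abs_of_nonneg (le_trans hc.le this.1)]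
      exact this.2
    have hdiff : Γ b - Γ a = ∫ τ in a..b, γ (τ / ε) := by
      rw [hΓ]
      have := intervalIntegral.integral_add_adjacent_intervals (hi 0 a) (hi a b)
      simp only at this ⊢
      linarith
    rw [hdiff]
    have : (∫ _ in a..b, c) ≤ ∫ τ in a..b, γ (τ / ε) := by
      apply intervalIntegral.integral_mono_on hab intervalIntegrable_const (hi a b)
      exact fun x _ => (hbd _).1
    simpa [mul_comm] using this
  have hlip : ∀ a b : ℝ, c * |a - b| ≤ |Γ a - Γ b| := by
    intro a b
    rcases le_total a b with h | h
    · have h0 : 0 ≤ c * (b - a) := mul_nonneg hc.le (by linarith)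
      rw [abs_sub_comm a b, abs_of_nonneg (by linarith), abs_sub_comm, abs_of_nonneg
        (by linarith [hgrow a b h])]
      exact hgrow a b h
    · have h0 : 0 ≤ c * (a - b) := mul_nonneg hc.le (by linarith)
      rw [abs_of_nonneg (by linarith), abs_of_nonneg (by linarith [hgrow b a h])]
      exact hgrow b a h
  -- conclude
  have hΓc : Γ (cε t) = t := hinv t
  have hmpos : 0 < m := hmean
  have hb : m * (t / m) = t := by field_simp
  have h1 : c * |cε t - t / m| ≤ |Γ (cε t) - Γ (t / m)| := hlip _ _
  have h2 : |Γ (cε t) - Γ (t / m)| ≤ 2 * C * ε := by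
    rw [hΓc]
    have := hΓclose (t / m)
    rw [hb] at this
    rw [abs_sub_comm]
    exact this
  have : c * |cε t - t / m| ≤ 2 * C * ε := le_trans h1 h2
  rw [div_mul_eq_mul_div, le_div_iff₀ hc, mul_comm (|cε t - t / m|) c]
  linarith [this]
end

section
/- Let Γ_ε(t) = ∫₀^t γ(τ/ε) dτ where γ is measurable, 1-periodic, with 0 < c ≤ γ ≤ C and ⟨γ⟩ = ∫₀¹ γ. Let c_ε = Γ_ε^{-1} and let I_ε(t) denote the closed interval with endpoints c_ε(t) and t/⟨γ⟩. Then the length of I_ε(t) satisfies |I_ε(t)| ≤ Kε uniformly in t, for a constant K depending only on c and C. -/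
open MeasureTheory intervalIntegral

private lemma aux_intInt (γ : ℝ → ℝ) (hγ : Measurable γ) {c C : ℝ} (hc : 0 < c)
    (hb : ∀ t, c ≤ γ t ∧ γ t ≤ C) (a b : ℝ) :
    IntervalIntegrable γ MeasureSpace.volume a b := by
  refine (_root_.intervalIntegrable_const (c := C)).mono_fun'
    (hγ.aestronglyMeasurable.restrict) ?_
  filter_upwards with x
  have h1 := (hb x).1
  have h2 := (hb x).2
  simp only [Real.norm_eq_abs]
  rw [abs_of_pos (by linarith)]
  exact h2

private lemma aux_upper {γ : ℝ → ℝ} {C a b : ℝ}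
    (hint : IntervalIntegrable γ MeasureSpace.volume a b) (hab : a ≤ b)
    (h : ∀ t, γ t ≤ C) : (∫ u in a..b, γ u) ≤ C * (b - a) := by
  have := intervalIntegral.integral_mono (μ := MeasureSpace.volume) (f := γ)
    (g := fun _ => C) hab hint intervalIntegrable_const h
  simpa [mul_comm] using this

private lemma aux_lower {γ : ℝ → ℝ} {c a b : ℝ}
    (hint : IntervalIntegrable γ MeasureSpace.volume a b) (hab : a ≤ b)
    (h : ∀ t, c ≤ γ t) : c * (b - a) ≤ ∫ u in a..b, γ u := by
  have := intervalIntegral.integral_mono (μ := MeasureSpace.volume) (g := γ)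
    (f := fun _ => c) hab intervalIntegrable_const hint h
  simpa [mul_comm] using this

/-- Key estimate: `|∫₀ˣ γ - x⟨γ⟩| ≤ C - c`. -/
private lemma aux_key (γ : ℝ → ℝ) (hγ : Measurable γ) (hper : ∀ t, γ (t + 1) = γ t)
    {c C : ℝ} (hc : 0 < c) (hb : ∀ t, c ≤ γ t ∧ γ t ≤ C) (x : ℝ) :
    |(∫ u in (0:ℝ)..x, γ u) - x * ∫ τ in (0:ℝ)..1, γ τ| ≤ C - c := by
  have hint := aux_intInt γ hγ hc hb
  have hP : Function.Periodic γ 1 := hper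
  set A : ℝ := ∫ τ in (0:ℝ)..1, γ τ with hA
  set n : ℤ := ⌊x⌋ with hn
  have hfl : (n : ℝ) ≤ x := Int.floor_le x
  have hfl' : x - (n : ℝ) < 1 := by
    have := Int.lt_floor_add_one x; linarith
  have hsplit : (∫ u in (0:ℝ)..x, γ u)
      = (∫ u in (0:ℝ)..(n:ℝ), γ u) + ∫ u in (n:ℝ)..x, γ u :=
    (integral_add_adjacent_intervals (hint 0 _) (hint _ _)).symm
  have hzs : (∫ u in (0:ℝ)..(n:ℝ), γ u) = (n:ℝ) * A := by
    have := hP.intervalIntegral_add_zsmul_eq n 0 hint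
    simpa [zsmul_eq_mul] using this
  have hcA : c ≤ A := by
    have := aux_lower (hint 0 1) (by norm_num) (fun t => (hb t).1)
    simpa using this
  have hAC : A ≤ C := by
    have := aux_upper (hint 0 1) (by norm_num) (fun t => (hb t).2)
    simpa using this
  have hlo : c * (x - n) ≤ ∫ u in (n:ℝ)..x, γ u :=
    aux_lower (hint _ _) hfl (fun t => (hb t).1)
  have hhi : (∫ u in (n:ℝ)..x, γ u) ≤ C * (x - n) :=
    aux_upper (hint _ _) hfl (fun t => (hb t).2)
  have hxn : 0 ≤ x - (n:ℝ) := by linarith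
  have heq : (∫ u in (0:ℝ)..x, γ u) - x * A
      = (∫ u in (n:ℝ)..x, γ u) - (x - n) * A := by
    rw [hsplit, hzs]; ring
  rw [heq, abs_le]
  constructor <;> nlinarith

/-- The interval `I_ε(t)` between `c_ε(t)` and `t/⟨γ⟩` has length `≤ Kε` uniformly in `t`,
for a constant `K` depending only on `c` and `C`. -/
theorem interval_length_le (c C : ℝ) (hc : 0 < c) (hcC : c ≤ C) :
    ∃ K : ℝ, 0 < K ∧
      ∀ γ : ℝ → ℝ, Measurable γ → (∀ t, γ (t + 1) = γ t) →
        (∀ t, c ≤ γ t ∧ γ t ≤ C) →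
        ∀ ε : ℝ, 0 < ε →
          ∀ cε : ℝ → ℝ,
            Function.RightInverse cε (fun t : ℝ => ∫ τ in (0:ℝ)..t, γ (τ / ε)) →
            ∀ t : ℝ,
              max (cε t) (t / (∫ τ in (0:ℝ)..1, γ τ))
                - min (cε t) (t / (∫ τ in (0:ℝ)..1, γ τ)) ≤ K * ε := by
  refine ⟨C / c, div_pos (hc.trans_le hcC) hc, ?_⟩
  intro γ hγ hper hb ε hε cε hinv t
  set A : ℝ := ∫ τ in (0:ℝ)..1, γ τ with hA
  have hint := aux_intInt γ hγ hc hb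
  have hcA : c ≤ A := by
    have := aux_lower (hint 0 1) (by norm_num) (fun t => (hb t).1)
    simpa using this
  have hA0 : 0 < A := hc.trans_le hcA
  set s : ℝ := cε t with hs
  have ht : (∫ τ in (0:ℝ)..s, γ (τ / ε)) = t := hinv t
  have hsub : (∫ τ in (0:ℝ)..s, γ (τ / ε)) = ε * ∫ u in (0:ℝ)..(s/ε), γ u := by
    rw [integral_comp_div γ (ne_of_gt hε)]
    simp
  have hkey := aux_key γ hγ hper hc hb (s / ε)
  rw [← hA] at hkey
  have h1 : |t - s * A| ≤ ε * (C - c) := by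
    have heq : t - s * A = ε * ((∫ u in (0:ℝ)..(s/ε), γ u) - (s/ε) * A) := by
      rw [← ht, hsub]
      field_simp
    rw [heq, abs_mul, abs_of_pos hε]
    exact mul_le_mul_of_nonneg_left hkey hε.le
  have h2 : |s - t / A| ≤ ε * (C - c) / A := by
    rw [le_div_iff₀ hA0]
    have e1 : (s - t / A) * A = s * A - t := by
      field_simp
    have heq : |s - t / A| * A = |s * A - t| := by
      rw [← e1, abs_mul, abs_of_pos hA0]
    rw [heq, abs_sub_comm]
    exact h1
  have h3 : max s (t / A) - min s (t / A) = |s - t / A| := by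
    rcases le_total s (t / A) with h | h
    · rw [max_eq_right h, min_eq_left h, abs_of_nonpos (by linarith)]; ring
    · rw [max_eq_left h, min_eq_right h, abs_of_nonneg (by linarith)]
  rw [h3]
  calc |s - t / A| ≤ ε * (C - c) / A := h2
  _ ≤ C / c * ε := by
      rw [div_le_iff₀ hA0]
      have h4 : C / c * ε * A ≥ C / c * ε * c := by
        have hC0 : (0:ℝ) < C := lt_of_lt_of_le hc hcC
        have : 0 ≤ C / c * ε := by positivity
        nlinarith
      have h5 : C / c * ε * c = C * ε := by field_simp
      nlinarith
end
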